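/- Consider the radially coupled system x_j'' + n_j² x_j + h_j(|x|) = p_j(t), j = 1,…,d, where |x| = √(x₁² + ⋯ + x_d²). Fix an index j with n_j ∈ ℕ and set Δh_j = limsup_{s→+∞} h_j(s) − liminf_{s→+∞} h_j(s). Then for every ε > 0 there exists A > 0 such that for every solution x of the system with x_j(0)² + x_j'(0)² ≥ A², and every φ ∈ [0,2π], one has ∫₀^{2π} h_j(|x(t)|)·sin(n_j t + φ) dt ≤ 2Δh_j + ε; the constant A is independent of the values of the other components (x_i(0), x_i'(0)), i ≠ j. -/

import Mathlib

open Real Filter MeasureTheory intervalIntegral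

lemma periodic_comp_integral (G : ℝ → ℝ) (hG : Function.Periodic G (2 * π))
    (hint : ∀ t₁ t₂, IntervalIntegrable G MeasureSpace.volume t₁ t₂)
    (m : ℕ) (hm : 0 < m) (ψ : ℝ) :
    ∫ t in (0:ℝ)..(2 * π), G ((m : ℝ) * t + ψ) = ∫ s in (0:ℝ)..(2 * π), G s := by
  have hm0 : (m : ℝ) ≠ 0 := Nat.cast_ne_zero.2 hm.ne'
  rw [intervalIntegral.integral_comp_mul_add G hm0 ψ]
  have h1 : (m : ℝ) * 0 + ψ = ψ := by ring
  have h2 : (m : ℝ) * (2 * π) + ψ = ψ + (m : ℤ) • (2 * π) := by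
    rw [zsmul_eq_mul]; push_cast; ring
  rw [h1, h2, hG.intervalIntegral_add_zsmul_eq (m : ℤ) ψ hint,
    hG.intervalIntegral_add_eq ψ 0]
  simp [smul_smul, hm0]

lemma integral_abs_sin : ∫ s in (0:ℝ)..(2 * π), |Real.sin s| = 4 := by
  have hi : ∀ t₁ t₂ : ℝ, IntervalIntegrable (fun s => |Real.sin s|) MeasureSpace.volume t₁ t₂ :=
    fun t₁ t₂ => (continuous_sin.abs).intervalIntegrable t₁ t₂
  have hsplit : ∫ s in (0:ℝ)..(2 * π), |Real.sin s|
      = (∫ s in (0:ℝ)..π, |Real.sin s|) + ∫ s in π..(2 * π), |Real.sin s| :=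
    (intervalIntegral.integral_add_adjacent_intervals (hi 0 π) (hi π (2*π))).symm
  have h1 : (∫ s in (0:ℝ)..π, |Real.sin s|) = 2 := by
    rw [intervalIntegral.integral_congr (g := Real.sin) ?_, integral_sin]
    · norm_num
    · intro s hs
      rw [Set.uIcc_of_le pi_nonneg] at hs
      exact abs_of_nonneg (sin_nonneg_of_nonneg_of_le_pi hs.1 hs.2)
  have h2 : (∫ s in π..(2*π), |Real.sin s|) = 2 := by
    rw [intervalIntegral.integral_congr (g := fun s => -Real.sin s) ?_]
    · rw [intervalIntegral.integral_neg, integral_sin]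
      rw [Real.cos_two_pi, Real.cos_pi]; norm_num
    · intro s hs
      rw [Set.uIcc_of_le (by linarith [pi_nonneg] : π ≤ 2*π)] at hs
      have : Real.sin s ≤ 0 := by
        have := Real.sin_nonpos_of_nonpos_of_neg_pi_le (x := s - 2*π) (by linarith [hs.2]) (by
          have := hs.1; linarith)
        simpa [Real.sin_sub_two_pi] using this
      simp [abs_of_nonpos this]
  rw [hsplit, h1, h2]; norm_num

lemma hasDerivAt_arctan_cos (u : ℝ) (hu : 0 < u) (s : ℝ) :
    HasDerivAt (fun s => -(u⁻¹ * arctan (Real.cos s * u⁻¹)))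
      (Real.sin s / (Real.cos s ^ 2 + u ^ 2)) s := by
  have h1 : HasDerivAt (fun s => Real.cos s * u⁻¹) (-Real.sin s * u⁻¹) s :=
    (Real.hasDerivAt_cos s).mul_const u⁻¹
  have h2 : HasDerivAt (fun s => arctan (Real.cos s * u⁻¹))
      ((1 / (1 + (Real.cos s * u⁻¹) ^ 2)) * (-Real.sin s * u⁻¹)) s :=
    HasDerivAt.comp (h₂ := Real.arctan) s (Real.hasDerivAt_arctan (Real.cos s * u⁻¹)) h1
  have := (h2.const_mul u⁻¹).neg
  refine this.congr_deriv ?_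
  have hu0 : u ≠ 0 := hu.ne'
  have hpos : Real.cos s ^ 2 + u ^ 2 ≠ 0 := by positivity
  field_simp
  ring
lemma integral_abs_sin_div (u : ℝ) (hu : 0 < u) :
    ∫ s in (0:ℝ)..(2 * π), |Real.sin s| / (Real.cos s ^ 2 + u ^ 2) ≤ 2 * π / u := by
  have hc : Continuous (fun s => |Real.sin s| / (Real.cos s ^ 2 + u ^ 2)) := by
    apply Continuous.div (continuous_sin.abs) (by continuity)
    intro s; positivity
  have hc2 : Continuous (fun s => Real.sin s / (Real.cos s ^ 2 + u ^ 2)) := by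
    apply Continuous.div continuous_sin (by continuity)
    intro s; positivity
  have hi : ∀ t₁ t₂ : ℝ, IntervalIntegrable (fun s => |Real.sin s| / (Real.cos s ^ 2 + u ^ 2))
      MeasureSpace.volume t₁ t₂ := fun t₁ t₂ => hc.intervalIntegrable t₁ t₂
  have key : ∀ a b : ℝ, (∫ s in a..b, Real.sin s / (Real.cos s ^ 2 + u ^ 2))
      = -(u⁻¹ * arctan (Real.cos b * u⁻¹)) + (u⁻¹ * arctan (Real.cos a * u⁻¹)) := by
    intro a b
    rw [intervalIntegral.integral_eq_sub_of_hasDerivAt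
      (fun s _ => hasDerivAt_arctan_cos u hu s) (hc2.intervalIntegrable a b)]
    ring
  have harct : arctan (1 * u⁻¹) < π / 2 := arctan_lt_pi_div_two _
  have harctnn : 0 ≤ arctan (1 * u⁻¹) := by
    rw [one_mul, ← Real.arctan_zero]; exact (Real.arctan_strictMono.le_iff_le).2 (by positivity)
  have h1 : (∫ s in (0:ℝ)..π, |Real.sin s| / (Real.cos s ^ 2 + u ^ 2)) ≤ π / u := by
    have : (∫ s in (0:ℝ)..π, |Real.sin s| / (Real.cos s ^ 2 + u ^ 2))
        = ∫ s in (0:ℝ)..π, Real.sin s / (Real.cos s ^ 2 + u ^ 2) := by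
      apply intervalIntegral.integral_congr
      intro s hs
      rw [Set.uIcc_of_le pi_nonneg] at hs
      simp only []
      rw [abs_of_nonneg (sin_nonneg_of_nonneg_of_le_pi hs.1 hs.2)]
    rw [this, key, Real.cos_pi, Real.cos_zero]
    have : arctan (-1 * u⁻¹) = -arctan (1 * u⁻¹) := by
      rw [neg_mul, arctan_neg]
    rw [this]
    have huinv : (0:ℝ) < u⁻¹ := by positivity
    calc -(u⁻¹ * -arctan (1 * u⁻¹)) + u⁻¹ * arctan (1 * u⁻¹)
        = 2 * u⁻¹ * arctan (1 * u⁻¹) := by ring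
      _ ≤ 2 * u⁻¹ * (π / 2) := by nlinarith
      _ = π / u := by field_simp
  have h2 : (∫ s in π..(2*π), |Real.sin s| / (Real.cos s ^ 2 + u ^ 2)) ≤ π / u := by
    have : (∫ s in π..(2*π), |Real.sin s| / (Real.cos s ^ 2 + u ^ 2))
        = ∫ s in π..(2*π), -(Real.sin s / (Real.cos s ^ 2 + u ^ 2)) := by
      apply intervalIntegral.integral_congr
      intro s hs
      rw [Set.uIcc_of_le (by linarith [pi_nonneg] : π ≤ 2*π)] at hs
      have hsin : Real.sin s ≤ 0 := by
        have := Real.sin_nonpos_of_nonpos_of_neg_pi_le (x := s - 2*π) (by linarith [hs.2])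
          (by have := hs.1; linarith)
        simpa [Real.sin_sub_two_pi] using this
      simp only []
      rw [abs_of_nonpos hsin]
      ring
    rw [this, intervalIntegral.integral_neg, key, Real.cos_pi, Real.cos_two_pi]
    have : arctan (-1 * u⁻¹) = -arctan (1 * u⁻¹) := by rw [neg_mul, arctan_neg]
    rw [this]
    have huinv : (0:ℝ) < u⁻¹ := by positivity
    calc -(-(u⁻¹ * arctan (1 * u⁻¹)) + u⁻¹ * -arctan (1 * u⁻¹))
        = 2 * u⁻¹ * arctan (1 * u⁻¹) := by ring
      _ ≤ 2 * u⁻¹ * (π / 2) := by nlinarith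
      _ = π / u := by field_simp
  have hsplit : ∫ s in (0:ℝ)..(2 * π), |Real.sin s| / (Real.cos s ^ 2 + u ^ 2)
      = (∫ s in (0:ℝ)..π, |Real.sin s| / (Real.cos s ^ 2 + u ^ 2))
        + ∫ s in π..(2*π), |Real.sin s| / (Real.cos s ^ 2 + u ^ 2) :=
    (intervalIntegral.integral_add_adjacent_intervals (hi 0 π) (hi π (2*π))).symm
  rw [hsplit]
  have : 2 * π / u = π / u + π / u := by ring
  rw [this]
  exact add_le_add h1 h2

lemma ode_rep (m : ℕ) (hm : 0 < m) (f xj xj' xj'' : ℝ → ℝ) (hf : Continuous f)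
    (hx : ∀ t, HasDerivAt xj (xj' t) t)
    (hx' : ∀ t, HasDerivAt xj' (xj'' t) t)
    (heq : ∀ t, xj'' t = f t - (m:ℝ)^2 * xj t) :
    ∀ t, xj t = xj 0 * Real.cos (m*t) + (xj' 0 / m) * Real.sin (m*t)
      + (m:ℝ)⁻¹ * (Real.sin (m*t) * (∫ s in (0:ℝ)..t, Real.cos (m*s) * f s)
        - Real.cos (m*t) * (∫ s in (0:ℝ)..t, Real.sin (m*s) * f s)) := by
  have hm0 : (m:ℝ) ≠ 0 := Nat.cast_ne_zero.2 hm.ne'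
  set a := xj 0
  set b := xj' 0
  set C : ℝ → ℝ := fun t => ∫ s in (0:ℝ)..t, Real.cos (m*s) * f s with hCdef
  set S : ℝ → ℝ := fun t => ∫ s in (0:ℝ)..t, Real.sin (m*s) * f s with hSdef
  have hfc : Continuous (fun s => Real.cos ((m:ℝ)*s) * f s) := by continuity
  have hfs : Continuous (fun s => Real.sin ((m:ℝ)*s) * f s) := by continuity
  have hC : ∀ t, HasDerivAt C (Real.cos (m*t) * f t) t := by
    intro t
    exact intervalIntegral.integral_hasDerivAt_right (hfc.intervalIntegrable 0 t)
      (hfc.stronglyMeasurableAtFilter _ _) hfc.continuousAt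
  have hS : ∀ t, HasDerivAt S (Real.sin (m*t) * f t) t := by
    intro t
    exact intervalIntegral.integral_hasDerivAt_right (hfs.intervalIntegrable 0 t)
      (hfs.stronglyMeasurableAtFilter _ _) hfs.continuousAt
  have hcos : ∀ t : ℝ, HasDerivAt (fun t : ℝ => Real.cos ((m:ℝ)*t)) (-Real.sin ((m:ℝ)*t) * m) t := by
    intro t
    exact ((Real.hasDerivAt_cos ((m:ℝ)*t)).comp t ((hasDerivAt_id t).const_mul (m:ℝ))).congr_deriv (by simp)
  have hsin : ∀ t : ℝ, HasDerivAt (fun t : ℝ => Real.sin ((m:ℝ)*t)) (Real.cos ((m:ℝ)*t) * m) t := by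
    intro t
    exact ((Real.hasDerivAt_sin ((m:ℝ)*t)).comp t ((hasDerivAt_id t).const_mul (m:ℝ))).congr_deriv (by simp)
  set w : ℝ → ℝ := fun t => a * Real.cos (m*t) + (b/m) * Real.sin (m*t)
    + (m:ℝ)⁻¹ * (Real.sin (m*t) * C t - Real.cos (m*t) * S t) with hwdef
  set w1 : ℝ → ℝ := fun t => -(a*m) * Real.sin (m*t) + b * Real.cos (m*t)
    + (Real.cos (m*t) * C t + Real.sin (m*t) * S t) with hw1def
  have hw : ∀ t, HasDerivAt w (w1 t) t := by
    intro t
    have H := (((hcos t).const_mul a).add ((hsin t).const_mul (b/(m:ℝ)))).add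
      ((((hsin t).mul (hC t)).sub ((hcos t).mul (hS t))).const_mul (m:ℝ)⁻¹)
    refine H.congr_deriv ?_
    simp only [hw1def]
    field_simp
    ring
  have hw1 : ∀ t, HasDerivAt w1 (f t - (m:ℝ)^2 * w t) t := by
    intro t
    have H := (((hsin t).const_mul (-(a*(m:ℝ)))).add ((hcos t).const_mul b)).add
      (((hcos t).mul (hC t)).add ((hsin t).mul (hS t)))
    refine H.congr_deriv ?_
    have hpyth := Real.sin_sq_add_cos_sq ((m:ℝ)*t)
    simp only [hwdef]
    field_simp
    linear_combination f t * hpyth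
  -- energy
  set g : ℝ → ℝ := fun t => xj t - w t with hgdef
  set g' : ℝ → ℝ := fun t => xj' t - w1 t with hg'def
  have hg : ∀ t, HasDerivAt g (g' t) t := fun t => (hx t).sub (hw t)
  have hg' : ∀ t, HasDerivAt g' (-(m:ℝ)^2 * g t) t := by
    intro t
    have H := (hx' t).sub (hw1 t)
    refine H.congr_deriv ?_
    rw [heq t]
    simp only [hgdef]
    ring
  set E : ℝ → ℝ := fun t => (g' t)^2 + (m:ℝ)^2 * (g t)^2 with hEdef
  have hE : ∀ t, HasDerivAt E 0 t := by
    intro t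
    have H := (((hg' t).pow 2)).add (((hg t).pow 2).const_mul ((m:ℝ)^2))
    refine H.congr_deriv ?_
    push_cast
    ring
  have hEconst : ∀ t, E t = E 0 := by
    intro t
    exact is_const_of_deriv_eq_zero (fun s => (hE s).differentiableAt)
      (fun s => (hE s).deriv) t 0
  have hw0 : w 0 = a := by
    simp [hwdef, hCdef, hSdef]
  have hw10 : w1 0 = b := by
    simp [hw1def, hCdef, hSdef]
  have hE0 : E 0 = 0 := by
    simp [hEdef, hgdef, hg'def, hw0, hw10, a, b]
  intro t
  have ht := hEconst t
  rw [hE0] at ht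
  have ht' : (g' t)^2 + (m:ℝ)^2 * (g t)^2 = 0 := ht
  have h1 : (g t)^2 ≤ 0 := by
    have hm1 : (1:ℝ) ≤ (m:ℝ)^2 := by
      have : (1:ℝ) ≤ (m:ℝ) := by exact_mod_cast hm
      nlinarith
    nlinarith [sq_nonneg (g' t), sq_nonneg (g t), ht']
  have : g t = 0 := by nlinarith [sq_nonneg (g t)]
  have : xj t = w t := by simp only [hgdef] at this; linarith
  simpa [hwdef] using this

lemma phase_exists (a c : ℝ) (h : 0 < a^2 + c^2) : ∃ ψ : ℝ, ∀ θ : ℝ,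
    a * Real.cos θ + c * Real.sin θ = Real.sqrt (a^2+c^2) * Real.cos (θ + ψ) := by
  set R := Real.sqrt (a^2+c^2) with hRdef
  have hR : 0 < R := Real.sqrt_pos.2 h
  have hR2 : R^2 = a^2 + c^2 := Real.sq_sqrt h.le
  have hbound : -1 ≤ a/R ∧ a/R ≤ 1 := by
    have ha : |a| ≤ R := by
      rw [hRdef]
      rw [← Real.sqrt_sq_eq_abs]
      exact Real.sqrt_le_sqrt (by nlinarith)
    rw [abs_le] at ha
    constructor
    · rw [neg_le, ← neg_div, div_le_one hR]; linarith
    · rw [div_le_one hR]; linarith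
  have hsin_ar : Real.sin (Real.arccos (a/R)) = |c|/R := by
    rw [Real.sin_arccos]
    have : 1 - (a/R)^2 = (|c|/R)^2 := by
      rw [div_pow, div_pow, sq_abs]
      field_simp
      nlinarith
    rw [this, Real.sqrt_sq (by positivity)]
  have hcos_ar : Real.cos (Real.arccos (a/R)) = a/R := Real.cos_arccos hbound.1 hbound.2
  rcases le_or_gt c 0 with hc | hc
  · refine ⟨Real.arccos (a/R), fun θ => ?_⟩
    rw [Real.cos_add, hcos_ar, hsin_ar, abs_of_nonpos hc]
    field_simp
    ring
  · refine ⟨-Real.arccos (a/R), fun θ => ?_⟩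
    rw [Real.cos_add, Real.cos_neg, Real.sin_neg, hcos_ar, hsin_ar, abs_of_pos hc]
    field_simp
    ring
lemma aux_case1 (y sφ D B q : ℝ) (h : |y| ≤ D) (hB : 0 ≤ B) (hq : 0 ≤ q) :
    y * sφ ≤ D * |sφ| + B * q := by
  have h1 : y * sφ ≤ |y| * |sφ| := by
    calc y * sφ ≤ |y * sφ| := le_abs_self _
      _ = |y| * |sφ| := abs_mul _ _
  have h2 : |y| * |sφ| ≤ D * |sφ| := mul_le_mul_of_nonneg_right h (abs_nonneg _)
  have h3 : 0 ≤ B * q := mul_nonneg hB hq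
  linarith

lemma aux_case2 (y sφ sψ cψ M' u v D : ℝ) (hy : |y| ≤ 2 * M') (hM' : 0 < M')
    (hu0 : 0 < u) (hcu : |cψ| ≤ u)
    (hpyth : sψ ^ 2 + cψ ^ 2 = 1) (hv2 : v ^ 2 = 1 - u ^ 2) (hv0 : 0 < v)
    (hD : 0 ≤ D) (hsφ1 : |sφ| ≤ 1) :
    y * sφ ≤ D * |sφ| + (2 * M') * (2 * u ^ 2 / v) * (|sψ| / (cψ ^ 2 + u ^ 2)) := by
  have hvs : v ≤ |sψ| := by
    nlinarith [abs_nonneg sψ, sq_abs sψ, sq_abs cψ,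
      mul_self_le_mul_self (abs_nonneg cψ) hcu]
  have hden0 : 0 < cψ ^ 2 + u ^ 2 := by positivity
  have hden : cψ ^ 2 + u ^ 2 ≤ 2 * u ^ 2 := by
    nlinarith [mul_self_le_mul_self (abs_nonneg cψ) hcu, sq_abs cψ]
  have hfrac : v / (2 * u ^ 2) ≤ |sψ| / (cψ ^ 2 + u ^ 2) := by
    rw [div_le_div_iff₀ (by positivity) hden0]
    nlinarith [mul_le_mul_of_nonneg_left hden (le_of_lt hv0),
      mul_le_mul_of_nonneg_right hvs (by positivity : (0:ℝ) ≤ 2 * u ^ 2)]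
  have key : (2 * M') * (2 * u ^ 2 / v) * (v / (2 * u ^ 2)) = 2 * M' := by
    field_simp
  have hcoef : 0 ≤ (2 * M') * (2 * u ^ 2 / v) := by positivity
  have h1 : y * sφ ≤ 2 * M' := by
    calc y * sφ ≤ |y| * |sφ| := by
          calc y * sφ ≤ |y * sφ| := le_abs_self _
            _ = |y| * |sφ| := abs_mul _ _
      _ ≤ (2 * M') * 1 := mul_le_mul hy hsφ1 (abs_nonneg _) (by linarith)
      _ = 2 * M' := mul_one _
  have h2 : 2 * M' ≤ (2 * M') * (2 * u ^ 2 / v) * (|sψ| / (cψ ^ 2 + u ^ 2)) := by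
    have h2' := mul_le_mul_of_nonneg_left hfrac hcoef
    rw [key] at h2'
    exact h2'
  have h3 : 0 ≤ D * |sφ| := mul_nonneg hD (abs_nonneg _)
  linarith

lemma aux_num (M' u v ε : ℝ) (hM' : 0 < M') (hu0 : 0 < u) (hv : 1/2 ≤ v)
    (hu : u ≤ ε / (32 * π * M')) (hε : 0 < ε) :
    (2 * M') * (2 * u ^ 2 / v) * (2 * π / u) ≤ ε / 2 := by
  have hv0 : 0 < v := by linarith
  have hπ := Real.pi_pos
  have e1 : (2 * M') * (2 * u ^ 2 / v) * (2 * π / u) = 8 * π * M' * u / v := by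
    field_simp; ring
  rw [e1]
  have h1 : 8 * π * M' * u / v ≤ 16 * π * M' * u := by
    rw [div_le_iff₀ hv0]
    nlinarith [mul_pos (mul_pos (mul_pos (by norm_num : (0:ℝ) < 8) hπ) hM') hu0]
  have h2 : 16 * π * M' * u ≤ ε / 2 := by
    have h3 : (0:ℝ) ≤ 16 * π * M' := by positivity
    calc 16 * π * M' * u ≤ 16 * π * M' * (ε / (32 * π * M')) :=
          mul_le_mul_of_nonneg_left hu h3
      _ = ε / 2 := by field_simp; ring
  linarith

lemma aux_q (a b q mm : ℝ) (hm1 : 1 ≤ mm) (hA2 : (mm * q) ^ 2 ≤ a ^ 2 + b ^ 2) :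
    q ^ 2 ≤ a ^ 2 + (b / mm) ^ 2 := by
  have hmm0 : mm ≠ 0 := by linarith
  have hmmpos : 0 < mm := by linarith
  have hb2 : (b / mm) ^ 2 * mm ^ 2 = b ^ 2 := by field_simp
  have hmm2 : 1 ≤ mm ^ 2 := by nlinarith
  have hX : 0 ≤ mm ^ 2 * (a ^ 2 + (b / mm) ^ 2 - q ^ 2) := by
    have ha := mul_le_mul_of_nonneg_right hmm2 (sq_nonneg a)
    ring_nf
    ring_nf at ha hb2 hA2
    linarith
  by_contra hq
  push_neg at hq
  have hmm2pos : 0 < mm ^ 2 := by positivity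
  have := mul_pos hmm2pos (sub_pos.2 hq)
  ring_nf at hX this
  linarith
set_option maxHeartbeats 1000000

/-- For the radially coupled system `x_j'' + n_j² x_j + h_j(|x|) = p_j(t)` with
`|x| = √(x₁² + ⋯ + x_d²)`, fix `j` with `n_j ∈ ℕ` and set
`Δh_j = limsup_{s→+∞} h_j(s) - liminf_{s→+∞} h_j(s)`.  Then for every `ε > 0` there is
`A > 0`, independent of the other components of the initial data, such that every solution
with `x_j(0)² + x_j'(0)² ≥ A²` satisfies
`∫₀^{2π} h_j(|x(t)|) sin(n_j t + φ) dt ≤ 2Δh_j + ε` for all `φ ∈ [0,2π]`. -/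
theorem radial_asymptotic_integral_estimate
    (d : ℕ) (n : Fin d → ℝ) (h : Fin d → ℝ → ℝ) (p : Fin d → ℝ → ℝ)
    (hn : ∀ j, 0 < n j)
    (hLip : ∀ j, LocallyLipschitzOn (Set.Ici 0) (h j))
    (hbd : ∀ j, ∃ M, ∀ s ∈ Set.Ici (0 : ℝ), |h j s| ≤ M)
    (hp : ∀ j, Continuous (p j))
    (hper : ∀ j, Function.Periodic (p j) (2 * Real.pi))
    (j : Fin d) (m : ℕ) (hm : 0 < m) (hnj : n j = (m : ℝ))
    (Δ : ℝ)
    (hΔ : Δ = Filter.limsup (h j) Filter.atTop - Filter.liminf (h j) Filter.atTop) :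
    ∀ ε > 0, ∃ A > 0, ∀ x x' x'' : Fin d → ℝ → ℝ,
      (∀ i t, HasDerivAt (x i) (x' i t) t) →
      (∀ i t, HasDerivAt (x' i) (x'' i t) t) →
      (∀ i t, x'' i t + (n i) ^ 2 * x i t
        + h i (Real.sqrt (∑ l, (x l t) ^ 2)) = p i t) →
      (x j 0) ^ 2 + (x' j 0) ^ 2 ≥ A ^ 2 →
      ∀ φ ∈ Set.Icc (0 : ℝ) (2 * Real.pi),
        (∫ t in (0 : ℝ)..(2 * Real.pi),
            h j (Real.sqrt (∑ l, (x l t) ^ 2)) * Real.sin (n j * t + φ))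
          ≤ 2 * Δ + ε := by
  intro ε hε
  obtain ⟨M, hM⟩ := hbd j
  have hM0 : 0 ≤ M := le_trans (abs_nonneg _) (hM 0 (Set.mem_Ici.mpr le_rfl))
  have hm1 : (1:ℝ) ≤ (m:ℝ) := by exact_mod_cast hm
  have hm0 : (m:ℝ) ≠ 0 := by linarith
  have hπ := Real.pi_pos
  -- limsup / liminf machinery
  set L := Filter.limsup (h j) Filter.atTop with hLdef
  set l := Filter.liminf (h j) Filter.atTop with hldef
  have hbdd_above : Filter.IsBoundedUnder (· ≤ ·) Filter.atTop (h j) :=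
    ⟨M, Filter.eventually_map.2 (Filter.eventually_atTop.2 ⟨0, fun s hs => (abs_le.1 (hM s hs)).2⟩)⟩
  have hbdd_below : Filter.IsBoundedUnder (· ≥ ·) Filter.atTop (h j) :=
    ⟨-M, Filter.eventually_map.2 (Filter.eventually_atTop.2 ⟨0, fun s hs => (abs_le.1 (hM s hs)).1⟩)⟩
  have hΔ0 : 0 ≤ Δ := by
    rw [hΔ]
    have := Filter.liminf_le_limsup (f := Filter.atTop) (u := h j) hbdd_above hbdd_below
    linarith
  set δ := ε / 8 with hδdef
  have hδ0 : 0 < δ := by positivity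
  set c := (L + l) / 2 with hcdef
  have hLev : ∀ᶠ s in Filter.atTop, h j s < L + δ :=
    Filter.eventually_lt_of_limsup_lt (by linarith) hbdd_above
  have hlev : ∀ᶠ s in Filter.atTop, l - δ < h j s :=
    Filter.eventually_lt_of_lt_liminf (by linarith) hbdd_below
  obtain ⟨K₀, hK₀⟩ := Filter.eventually_atTop.1 (hLev.and hlev)
  have hKbound : ∀ s, K₀ ≤ s → |h j s - c| ≤ Δ / 2 + δ := by
    intro s hs
    obtain ⟨h1, h2⟩ := hK₀ s hs
    rw [abs_le]
    constructor <;> · rw [hcdef, hΔ]; linarith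
  set K := max K₀ 0 with hKdef
  have hK0 : 0 ≤ K := le_max_right _ _
  have hK₀K : K₀ ≤ K := le_max_left _ _
  -- bound for p j on [0, 2π]
  obtain ⟨P, hP⟩ := (isCompact_Icc (a := (0:ℝ)) (b := 2*π)).exists_bound_of_continuousOn
    ((hp j).continuousOn)
  have hP0 : (0:ℝ) ≤ P := le_trans (norm_nonneg _) (hP 0 ⟨le_rfl, by positivity⟩)
  set C₀ := 4 * π * (P + M) with hC₀def
  have hC₀0 : 0 ≤ C₀ := by positivity
  set M' := M + |c| + 1 with hM'def
  have hM'0 : (0:ℝ) < M' := by positivity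
  set u := min (1/2) (ε / (32 * π * M')) with hudef
  have hu0 : 0 < u := lt_min (by norm_num) (by positivity)
  have hu12 : u ≤ 1/2 := min_le_left _ _
  have hu_le : u ≤ ε / (32 * π * M') := min_le_right _ _
  have hu2 : u^2 ≤ 1/4 := by
    have h1 := pow_le_pow_left₀ hu0.le hu12 2
    norm_num at h1
    linarith
  set v := Real.sqrt (1 - u^2) with hvdef
  have hv2 : v^2 = 1 - u^2 := Real.sq_sqrt (by linarith)
  have hv12 : (1:ℝ)/2 ≤ v := by
    rw [hvdef, show (1:ℝ)/2 = Real.sqrt ((1/2)^2) by rw [Real.sqrt_sq]; norm_num]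
    apply Real.sqrt_le_sqrt
    norm_num
    linarith
  have hv0 : (0:ℝ) < v := by linarith
  have hKC1 : (0:ℝ) < K + C₀ + 1 := by linarith
  refine ⟨(m:ℝ) * ((K + C₀ + 1) / u), ?_, ?_⟩
  · have h1 : (0:ℝ) < (K + C₀ + 1) / u := div_pos hKC1 hu0
    have h2 : (0:ℝ) < (m:ℝ) := by linarith
    exact mul_pos h2 h1
  intro x x' x'' hd1 hd2 hsys hA2 φ hφ
  -- continuity setup
  have hxc : ∀ i, Continuous (x i) := fun i =>
    continuous_iff_continuousAt.2 fun t => (hd1 i t).continuousAt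
  have hxvc : Continuous (fun t => Real.sqrt (∑ l, (x l t) ^ 2)) :=
    Real.continuous_sqrt.comp (continuous_finset_sum _ (fun i _ => (hxc i).pow 2))
  have hxv0 : ∀ t, 0 ≤ Real.sqrt (∑ l, (x l t) ^ 2) := fun t => Real.sqrt_nonneg _
  have hhc : Continuous (fun t => h j (Real.sqrt (∑ l, (x l t) ^ 2))) :=
    ((hLip j).continuousOn).comp_continuous hxvc (fun t => hxv0 t)
  set f : ℝ → ℝ := fun t => p j t - h j (Real.sqrt (∑ l, (x l t) ^ 2)) with hfdef
  have hfc : Continuous f := (hp j).sub hhc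
  have heqj : ∀ t, x'' j t = f t - (m:ℝ)^2 * x j t := by
    intro t
    simp only [hfdef]
    have hh := hsys j t
    rw [hnj] at hh
    linarith
  have rep := ode_rep m hm f (x j) (x' j) (x'' j) hfc (hd1 j) (hd2 j) heqj
  set a := x j 0 with hadef
  set b := x' j 0 with hbdef
  -- phase
  have hab2 : 0 < a^2 + (b/(m:ℝ))^2 := by
    have hA0 : (0:ℝ) < (m:ℝ) * ((K + C₀ + 1) / u) :=
      mul_pos (by linarith) (div_pos hKC1 hu0)
    have h2 : 0 < a^2 + b^2 := lt_of_lt_of_le (by positivity) hA2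
    rcases eq_or_ne a 0 with ha | ha
    · have hb : b ≠ 0 := by
        intro hb
        rw [ha, hb] at h2
        norm_num at h2
      have h3 : (0:ℝ) < (b/(m:ℝ))^2 := by positivity
      have h4 : (0:ℝ) ≤ a^2 := sq_nonneg a
      linarith
    · have h3 : (0:ℝ) < a^2 := by positivity
      have h4 : (0:ℝ) ≤ (b/(m:ℝ))^2 := sq_nonneg _
      linarith
  obtain ⟨ψ, hψ⟩ := phase_exists a (b/(m:ℝ)) hab2
  set R := Real.sqrt (a^2 + (b/(m:ℝ))^2) with hRdef
  have hR0 : 0 < R := Real.sqrt_pos.2 hab2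
  have hRlarge : (K + C₀ + 1) / u ≤ R := by
    have hq0 : 0 ≤ (K + C₀ + 1) / u := le_of_lt (div_pos hKC1 hu0)
    have hA2' : ((m:ℝ) * ((K + C₀ + 1) / u))^2 ≤ a^2 + b^2 := hA2
    have h1 := aux_q a b ((K + C₀ + 1) / u) (m:ℝ) hm1 hA2'
    calc (K + C₀ + 1) / u = Real.sqrt (((K + C₀ + 1) / u)^2) := (Real.sqrt_sq hq0).symm
      _ ≤ R := Real.sqrt_le_sqrt h1
  -- remainder bound
  have hρbound : ∀ t ∈ Set.Icc (0:ℝ) (2*π),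
      |(m:ℝ)⁻¹ * (Real.sin ((m:ℝ)*t) * (∫ s in (0:ℝ)..t, Real.cos ((m:ℝ)*s) * f s)
        - Real.cos ((m:ℝ)*t) * (∫ s in (0:ℝ)..t, Real.sin ((m:ℝ)*s) * f s))| ≤ C₀ := by
    intro t ht
    have hfb : ∀ s ∈ Set.Icc (0:ℝ) (2*π), |f s| ≤ P + M := by
      intro s hs
      calc |f s| ≤ |p j s| + |h j (Real.sqrt (∑ l, (x l s) ^ 2))| := abs_sub _ _
        _ ≤ P + M := add_le_add (hP s hs) (hM _ (hxv0 s))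
    have hint : ∀ (g : ℝ → ℝ), Continuous g → (∀ s, |g s| ≤ 1) →
        |∫ s in (0:ℝ)..t, g s * f s| ≤ (P + M) * (2*π) := by
      intro g hg hg1
      have hb1 := intervalIntegral.norm_integral_le_of_norm_le_const
        (C := P + M) (f := fun s => g s * f s) (a := 0) (b := t) ?_
      · calc |∫ s in (0:ℝ)..t, g s * f s| ≤ (P+M) * |t - 0| := hb1
          _ ≤ (P+M) * (2*π) := by
            apply mul_le_mul_of_nonneg_left _ (by positivity)
            rw [sub_zero, abs_of_nonneg ht.1]
            exact ht.2
      · intro s hs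
        rw [Set.uIoc_of_le ht.1] at hs
        have hs' : s ∈ Set.Icc (0:ℝ) (2*π) := ⟨le_of_lt hs.1, le_trans hs.2 ht.2⟩
        rw [Real.norm_eq_abs, abs_mul]
        calc |g s| * |f s| ≤ 1 * (P + M) :=
              mul_le_mul (hg1 s) (hfb s hs') (abs_nonneg _) (by norm_num)
          _ = P + M := one_mul _
    have hCb := hint (fun s => Real.cos ((m:ℝ)*s))
      (Real.continuous_cos.comp (continuous_const.mul continuous_id)) (fun s => abs_cos_le_one _)
    have hSb := hint (fun s => Real.sin ((m:ℝ)*s))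
      (Real.continuous_sin.comp (continuous_const.mul continuous_id)) (fun s => abs_sin_le_one _)
    have hminv : (m:ℝ)⁻¹ ≤ 1 := inv_le_one_of_one_le₀ hm1
    have hminv0 : (0:ℝ) ≤ (m:ℝ)⁻¹ := by positivity
    calc |(m:ℝ)⁻¹ * (Real.sin ((m:ℝ)*t) * (∫ s in (0:ℝ)..t, Real.cos ((m:ℝ)*s) * f s)
        - Real.cos ((m:ℝ)*t) * (∫ s in (0:ℝ)..t, Real.sin ((m:ℝ)*s) * f s))|
        = (m:ℝ)⁻¹ * |Real.sin ((m:ℝ)*t) * (∫ s in (0:ℝ)..t, Real.cos ((m:ℝ)*s) * f s)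
          - Real.cos ((m:ℝ)*t) * (∫ s in (0:ℝ)..t, Real.sin ((m:ℝ)*s) * f s)| := by
          rw [abs_mul, abs_of_nonneg hminv0]
      _ ≤ 1 * (|Real.sin ((m:ℝ)*t) * (∫ s in (0:ℝ)..t, Real.cos ((m:ℝ)*s) * f s)|
          + |Real.cos ((m:ℝ)*t) * (∫ s in (0:ℝ)..t, Real.sin ((m:ℝ)*s) * f s)|) :=
          mul_le_mul hminv (abs_sub _ _) (abs_nonneg _) (by norm_num)
      _ ≤ |∫ s in (0:ℝ)..t, Real.cos ((m:ℝ)*s) * f s|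
          + |∫ s in (0:ℝ)..t, Real.sin ((m:ℝ)*s) * f s| := by
          rw [one_mul, abs_mul, abs_mul]
          apply add_le_add
          · calc |Real.sin ((m:ℝ)*t)| * |∫ s in (0:ℝ)..t, Real.cos ((m:ℝ)*s) * f s|
                ≤ 1 * |∫ s in (0:ℝ)..t, Real.cos ((m:ℝ)*s) * f s| :=
                  mul_le_mul_of_nonneg_right (abs_sin_le_one _) (abs_nonneg _)
              _ = _ := one_mul _
          · calc |Real.cos ((m:ℝ)*t)| * |∫ s in (0:ℝ)..t, Real.sin ((m:ℝ)*s) * f s|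
                ≤ 1 * |∫ s in (0:ℝ)..t, Real.sin ((m:ℝ)*s) * f s| :=
                  mul_le_mul_of_nonneg_right (abs_cos_le_one _) (abs_nonneg _)
              _ = _ := one_mul _
      _ ≤ (P+M)*(2*π) + (P+M)*(2*π) := add_le_add hCb hSb
      _ = C₀ := by rw [hC₀def]; ring
  -- pointwise bound
  have key : ∀ t ∈ Set.Icc (0:ℝ) (2*π),
      (h j (Real.sqrt (∑ l, (x l t) ^ 2)) - c) * Real.sin ((m:ℝ)*t + φ)
        ≤ (Δ/2 + δ) * |Real.sin ((m:ℝ)*t + φ)|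
          + (2*M') * (2*u^2/v) * (|Real.sin ((m:ℝ)*t + ψ)| / ((Real.cos ((m:ℝ)*t + ψ))^2 + u^2)) := by
    intro t ht
    have hD0 : 0 ≤ Δ/2 + δ := by linarith
    by_cases hcase : K ≤ |x j t|
    · have hsqrtK : K₀ ≤ Real.sqrt (∑ l, (x l t) ^ 2) := by
        have h1 : |x j t| ≤ Real.sqrt (∑ l, (x l t) ^ 2) := by
          rw [← Real.sqrt_sq_eq_abs]
          exact Real.sqrt_le_sqrt
            (Finset.single_le_sum (fun i _ => sq_nonneg (x i t)) (Finset.mem_univ j))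
        linarith
      have hB0 : 0 ≤ (2*M') * (2*u^2/v) := by positivity
      have hq0 : 0 ≤ |Real.sin ((m:ℝ)*t + ψ)| / ((Real.cos ((m:ℝ)*t + ψ))^2 + u^2) := by
        positivity
      exact aux_case1 _ _ _ _ _ (hKbound _ hsqrtK) hB0 hq0
    · push_neg at hcase
      have hxjt : x j t = R * Real.cos ((m:ℝ)*t + ψ)
          + (m:ℝ)⁻¹ * (Real.sin ((m:ℝ)*t) * (∫ s in (0:ℝ)..t, Real.cos ((m:ℝ)*s) * f s)
            - Real.cos ((m:ℝ)*t) * (∫ s in (0:ℝ)..t, Real.sin ((m:ℝ)*s) * f s)) := by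
        have hr := rep t
        rw [hψ ((m:ℝ)*t)] at hr
        exact hr
      have h2 : R * |Real.cos ((m:ℝ)*t + ψ)| < K + C₀ := by
        have e : R * Real.cos ((m:ℝ)*t + ψ) = x j t
            - (m:ℝ)⁻¹ * (Real.sin ((m:ℝ)*t) * (∫ s in (0:ℝ)..t, Real.cos ((m:ℝ)*s) * f s)
              - Real.cos ((m:ℝ)*t) * (∫ s in (0:ℝ)..t, Real.sin ((m:ℝ)*s) * f s)) := by
          rw [hxjt]; ring
        calc R * |Real.cos ((m:ℝ)*t + ψ)| = |R * Real.cos ((m:ℝ)*t + ψ)| := by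
              rw [abs_mul, abs_of_pos hR0]
          _ = |x j t - (m:ℝ)⁻¹ * (Real.sin ((m:ℝ)*t) * (∫ s in (0:ℝ)..t, Real.cos ((m:ℝ)*s) * f s)
              - Real.cos ((m:ℝ)*t) * (∫ s in (0:ℝ)..t, Real.sin ((m:ℝ)*s) * f s))| := by rw [e]
          _ ≤ |x j t| + |(m:ℝ)⁻¹ * (Real.sin ((m:ℝ)*t) * (∫ s in (0:ℝ)..t, Real.cos ((m:ℝ)*s) * f s)
              - Real.cos ((m:ℝ)*t) * (∫ s in (0:ℝ)..t, Real.sin ((m:ℝ)*s) * f s))| := abs_sub _ _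
          _ < K + C₀ := add_lt_add_of_lt_of_le hcase (hρbound t ht)
      have hcu : |Real.cos ((m:ℝ)*t + ψ)| ≤ u := by
        have hRu : K + C₀ + 1 ≤ R * u := by
          have h3 := (div_le_iff₀ hu0).1 hRlarge
          linarith
        have hlt : R * |Real.cos ((m:ℝ)*t + ψ)| < R * u := by linarith
        exact le_of_lt (lt_of_mul_lt_mul_left hlt hR0.le)
      have hy : |h j (Real.sqrt (∑ l, (x l t) ^ 2)) - c| ≤ 2 * M' := by
        calc |h j (Real.sqrt (∑ l, (x l t) ^ 2)) - c|
            ≤ |h j (Real.sqrt (∑ l, (x l t) ^ 2))| + |c| := abs_sub _ _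
          _ ≤ M + |c| := add_le_add (hM _ (hxv0 t)) le_rfl
          _ ≤ 2 * M' := by rw [hM'def]; linarith [abs_nonneg c]
      exact aux_case2 _ _ _ _ M' u v (Δ/2 + δ) hy hM'0 hu0 hcu
        (Real.sin_sq_add_cos_sq _) hv2 hv0 hD0 (abs_sin_le_one _)
  -- integral computations
  have hG1c : Continuous (fun s => |Real.sin s|) := continuous_sin.abs
  have hG2c : Continuous (fun s => |Real.sin s| / ((Real.cos s)^2 + u^2)) := by
    apply Continuous.div hG1c ((Real.continuous_cos.pow 2).add continuous_const)
    intro s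
    show (Real.cos s)^2 + u^2 ≠ 0
    positivity
  have hG1per : Function.Periodic (fun s => |Real.sin s|) (2*π) := fun s => by
    simp [Real.sin_periodic s]
  have hG2per : Function.Periodic (fun s => |Real.sin s| / ((Real.cos s)^2 + u^2)) (2*π) :=
    fun s => by simp [Real.sin_periodic s, Real.cos_periodic s]
  have hI1 : (∫ t in (0:ℝ)..(2*π), |Real.sin ((m:ℝ)*t + φ)|) = 4 := by
    have h1 := periodic_comp_integral (fun s => |Real.sin s|) hG1per
      (fun t₁ t₂ => hG1c.intervalIntegrable t₁ t₂) m hm φ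
    rw [integral_abs_sin] at h1
    exact h1
  have hI2 : (∫ t in (0:ℝ)..(2*π),
      |Real.sin ((m:ℝ)*t + ψ)| / ((Real.cos ((m:ℝ)*t + ψ))^2 + u^2)) ≤ 2*π/u := by
    have h1 := periodic_comp_integral (fun s => |Real.sin s| / ((Real.cos s)^2 + u^2)) hG2per
      (fun t₁ t₂ => hG2c.intervalIntegrable t₁ t₂) m hm ψ
    rw [h1]
    exact integral_abs_sin_div u hu0
  have hI0 : (∫ t in (0:ℝ)..(2*π), Real.sin ((m:ℝ)*t + φ)) = 0 := by
    have h1 := periodic_comp_integral Real.sin Real.sin_periodic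
      (fun t₁ t₂ => continuous_sin.intervalIntegrable t₁ t₂) m hm φ
    rw [integral_sin] at h1
    norm_num [Real.cos_two_pi] at h1
    exact h1
  -- continuity of integrands
  have haffφ : Continuous (fun t : ℝ => (m:ℝ)*t + φ) :=
    (continuous_const.mul continuous_id).add continuous_const
  have haffψ : Continuous (fun t : ℝ => (m:ℝ)*t + ψ) :=
    (continuous_const.mul continuous_id).add continuous_const
  have hsinφc : Continuous (fun t => Real.sin ((m:ℝ)*t + φ)) :=
    Real.continuous_sin.comp haffφ
  have hintL : Continuous (fun t =>
      (h j (Real.sqrt (∑ l, (x l t) ^ 2)) - c) * Real.sin ((m:ℝ)*t + φ)) :=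
    (hhc.sub continuous_const).mul hsinφc
  have hintA : Continuous (fun t => (Δ/2 + δ) * |Real.sin ((m:ℝ)*t + φ)|) :=
    continuous_const.mul (hsinφc.abs)
  have hintB : Continuous (fun t =>
      (2*M') * (2*u^2/v) * (|Real.sin ((m:ℝ)*t + ψ)| / ((Real.cos ((m:ℝ)*t + ψ))^2 + u^2))) := by
    apply continuous_const.mul
    apply Continuous.div ((Real.continuous_sin.comp haffψ).abs)
      (((Real.continuous_cos.comp haffψ).pow 2).add continuous_const)
    intro t
    show (Real.cos ((m:ℝ)*t + ψ))^2 + u^2 ≠ 0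
    positivity
  -- assemble
  rw [hnj]
  have hsplit : (∫ t in (0:ℝ)..(2*π), h j (Real.sqrt (∑ l, (x l t) ^ 2)) * Real.sin ((m:ℝ)*t + φ))
      = (∫ t in (0:ℝ)..(2*π),
          (h j (Real.sqrt (∑ l, (x l t) ^ 2)) - c) * Real.sin ((m:ℝ)*t + φ))
        + c * ∫ t in (0:ℝ)..(2*π), Real.sin ((m:ℝ)*t + φ) := by
    rw [← intervalIntegral.integral_const_mul,
      ← intervalIntegral.integral_add (hintL.intervalIntegrable _ _)
        ((show Continuous fun t => c * Real.sin ((m:ℝ)*t + φ) from continuous_const.mul hsinφc).intervalIntegrable _ _)]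
    apply intervalIntegral.integral_congr
    intro t _
    ring
  have hmono : (∫ t in (0:ℝ)..(2*π),
      (h j (Real.sqrt (∑ l, (x l t) ^ 2)) - c) * Real.sin ((m:ℝ)*t + φ))
      ≤ ∫ t in (0:ℝ)..(2*π), ((Δ/2 + δ) * |Real.sin ((m:ℝ)*t + φ)|
        + (2*M') * (2*u^2/v) * (|Real.sin ((m:ℝ)*t + ψ)| / ((Real.cos ((m:ℝ)*t + ψ))^2 + u^2))) :=
    intervalIntegral.integral_mono_on (by positivity) (hintL.intervalIntegrable _ _)
      ((hintA.add hintB).intervalIntegrable _ _) key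
  have hRint : (∫ t in (0:ℝ)..(2*π), ((Δ/2 + δ) * |Real.sin ((m:ℝ)*t + φ)|
      + (2*M') * (2*u^2/v) * (|Real.sin ((m:ℝ)*t + ψ)| / ((Real.cos ((m:ℝ)*t + ψ))^2 + u^2))))
      = (Δ/2 + δ) * (∫ t in (0:ℝ)..(2*π), |Real.sin ((m:ℝ)*t + φ)|)
        + (2*M') * (2*u^2/v) * (∫ t in (0:ℝ)..(2*π),
            |Real.sin ((m:ℝ)*t + ψ)| / ((Real.cos ((m:ℝ)*t + ψ))^2 + u^2)) := by
    rw [intervalIntegral.integral_add (hintA.intervalIntegrable _ _) (hintB.intervalIntegrable _ _),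
      intervalIntegral.integral_const_mul, intervalIntegral.integral_const_mul]
  have hB0 : 0 ≤ (2*M') * (2*u^2/v) := by positivity
  have hIqB : (2*M') * (2*u^2/v) * (∫ t in (0:ℝ)..(2*π),
      |Real.sin ((m:ℝ)*t + ψ)| / ((Real.cos ((m:ℝ)*t + ψ))^2 + u^2))
      ≤ (2*M') * (2*u^2/v) * (2*π/u) := mul_le_mul_of_nonneg_left hI2 hB0
  have hnum := aux_num M' u v ε hM'0 hu0 hv12 hu_le hε
  rw [hsplit, hI0, mul_zero, add_zero]
  calc (∫ t in (0:ℝ)..(2*π),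
      (h j (Real.sqrt (∑ l, (x l t) ^ 2)) - c) * Real.sin ((m:ℝ)*t + φ))
      ≤ (Δ/2 + δ) * (∫ t in (0:ℝ)..(2*π), |Real.sin ((m:ℝ)*t + φ)|)
        + (2*M') * (2*u^2/v) * (∫ t in (0:ℝ)..(2*π),
            |Real.sin ((m:ℝ)*t + ψ)| / ((Real.cos ((m:ℝ)*t + ψ))^2 + u^2)) := by
        rw [← hRint]; exact hmono
    _ ≤ (Δ/2 + δ) * 4 + (2*M') * (2*u^2/v) * (2*π/u) := by
        rw [hI1]
        exact add_le_add le_rfl hIqB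
    _ ≤ 2*Δ + ε := by rw [hδdef] at *; linarith
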